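/- Let H be a Hopf algebra over k with antipode S, and H⁰ its Sweedler dual. Then the transpose map ᵗS : f ↦ f∘S maps H⁰ into H⁰, and ᵗS is an antipode for the bialgebra structure on H⁰ given by convolution product ∗_Δ, unit ε, coproduct the transpose of multiplication, and counit f ↦ f(1). -/

import Mathlib

open TensorProduct Coalgebra

/-- Membership in the Sweedler dual. -/
def InSweedlerDual (k : Type*) [Field k] {H : Type*} [Ring H] [Algebra k H]
    (f : Module.Dual k H) : Prop :=
  FiniteDimensional k
    (Submodule.span k (Set.range fun s : H => f ∘ₗ LinearMap.mulRight k s))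

/-- Convolution product on the dual. -/
noncomputable def convProd {k : Type*} [Field k] {H : Type*} [Ring H] [HopfAlgebra k H]
    (φ ψ : Module.Dual k H) : Module.Dual k H :=
  (TensorProduct.lid k k).toLinearMap ∘ₗ (TensorProduct.map φ ψ) ∘ₗ comul

/-!
A functional `f` lies in `H⁰` exactly when `f(xy) = Σᵢ gᵢ(x) hᵢ(y)` for finitely many
functionals `gᵢ, hᵢ`. Since `S` is an anti-homomorphism, such a decomposition of `f` gives
`f(S(xy)) = Σᵢ hᵢ(Sx) gᵢ(Sy)`, so `f ∘ S ∈ H⁰`. Given a decomposition, the convolution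
`Σᵢ (gᵢ ∘ T) ∗ (hᵢ ∘ U)` is `f ∘ μ ∘ (T ⊗ U) ∘ Δ`, and the antipode axioms of `H` turn this
into `f ∘ η ∘ ε = f(1) • ε` for `(T, U) = (S, id)` and `(id, S)`.
-/

namespace InSweedlerDual

variable {k : Type*} [Field k] {H : Type*} [Ring H] [Algebra k H]

theorem of_sum_mul {ι : Type*} [Fintype ι] {f : Module.Dual k H}
    (g h : ι → Module.Dual k H) (hfgh : ∀ x y : H, f (x * y) = ∑ i, g i x * h i y) :
    InSweedlerDual k f := by
  have translate_mem (s : H) :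
      f ∘ₗ LinearMap.mulRight k s ∈ Submodule.span k (Set.range g) := by
    have translate_eq : f ∘ₗ LinearMap.mulRight k s = ∑ i, h i s • g i := by
      ext x
      simp [hfgh, mul_comm]
    rw [translate_eq]
    exact Submodule.sum_mem _ fun i _ => Submodule.smul_mem _ _ (Submodule.subset_span ⟨i, rfl⟩)
  have hg := FiniteDimensional.span_of_finite k (Set.finite_range g)
  exact Submodule.finiteDimensional_of_le
    (Submodule.span_le.mpr (Set.range_subset_iff.mpr translate_mem))

theorem exists_sum_mul {f : Module.Dual k H} (hf : InSweedlerDual k f) :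
    ∃ (n : ℕ) (g h : Fin n → Module.Dual k H), ∀ x y : H, f (x * y) = ∑ i, g i x * h i y := by
  let V := Submodule.span k (Set.range fun s : H => f ∘ₗ LinearMap.mulRight k s)
  have hV : FiniteDimensional k V := hf
  let translate : H →ₗ[k] V :=
    ((LinearMap.llcomp k H H k f).comp (LinearMap.mul k H).flip).codRestrict V
      fun s => Submodule.subset_span ⟨s, rfl⟩
  have hV_free : Module.Free k V := Module.Free.of_divisionRing k V
  let b := Module.finBasis k V
  refine ⟨_, fun j => b j, fun j => b.coord j ∘ₗ translate, fun x y => ?_⟩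
  have hfxy : f (x * y) = (translate y : Module.Dual k H) x := rfl
  rw [hfxy, ← b.sum_repr (translate y)]
  simp only [Submodule.coe_sum, Submodule.coe_smul, LinearMap.sum_apply,
    LinearMap.smul_apply, smul_eq_mul, Module.Basis.coord_apply, LinearMap.comp_apply]
  exact Finset.sum_congr rfl fun j _ => mul_comm _ _

end InSweedlerDual

section Antipode

variable {k : Type*} [Field k] {H : Type*} [Ring H] [HopfAlgebra k H]

theorem inSweedlerDual_comp_antipode {f : Module.Dual k H} (hf : InSweedlerDual k f) :
    InSweedlerDual k (f ∘ₗ HopfAlgebra.antipode k) := by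
  obtain ⟨n, g, h, hfgh⟩ := hf.exists_sum_mul
  refine InSweedlerDual.of_sum_mul (fun i => h i ∘ₗ HopfAlgebra.antipode k)
    (fun i => g i ∘ₗ HopfAlgebra.antipode k) fun x y => ?_
  simp [HopfAlgebra.antipode_mul_antidistrib, hfgh, mul_comm]

theorem sum_convProd_comp {ι : Type*} [Fintype ι] {f : Module.Dual k H}
    (g h : ι → Module.Dual k H) (hfgh : ∀ x y : H, f (x * y) = ∑ i, g i x * h i y)
    (T U : H →ₗ[k] H) :
    ∑ i, convProd (g i ∘ₗ T) (h i ∘ₗ U) = f ∘ₗ LinearMap.mul' k H ∘ₗ map T U ∘ₗ comul := by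
  have : ∑ i, (TensorProduct.lid k k).toLinearMap ∘ₗ map (g i ∘ₗ T) (h i ∘ₗ U) =
      f ∘ₗ LinearMap.mul' k H ∘ₗ map T U := by
    refine TensorProduct.ext' fun x y => ?_
    simp [hfgh]
  ext x
  simpa [convProd] using LinearMap.congr_fun this (comul x)

theorem comp_linearMap_comp_counit (f : Module.Dual k H) :
    f ∘ₗ Algebra.linearMap k H ∘ₗ counit = f 1 • counit (R := k) (A := H) := by
  ext x
  simp [Algebra.algebraMap_eq_smul_one, mul_comm]

end Antipode

/-- the transpose `ᵗS : f ↦ f ∘ S` of the antipode maps `H⁰` into `H⁰`,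
and it is an antipode for the dual bialgebra structure on `H⁰`: for any representation of
the coproduct of `f` (i.e. any decomposition `f(xy) = Σᵢ gᵢ(x)hᵢ(y)`), one has
`Σᵢ (gᵢ∘S) ∗ hᵢ = f(1)·ε` and `Σᵢ gᵢ ∗ (hᵢ∘S) = f(1)·ε`. -/
theorem sweedlerDual_antipode (k : Type*) [Field k] (H : Type*) [Ring H]
    [HopfAlgebra k H] (f : Module.Dual k H) (hf : InSweedlerDual k f) :
    InSweedlerDual k (f ∘ₗ HopfAlgebra.antipode (R := k)) ∧
    (∀ (n : ℕ) (g h : Fin n → Module.Dual k H),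
      (∀ x y : H, f (x * y) = ∑ i, g i x * h i y) →
      (∑ i, convProd (g i ∘ₗ HopfAlgebra.antipode (R := k)) (h i) =
          f 1 • counit (R := k) ∧
       ∑ i, convProd (g i) (h i ∘ₗ HopfAlgebra.antipode (R := k)) =
          f 1 • counit (R := k))) := by
  refine ⟨inSweedlerDual_comp_antipode hf, fun n g h hfgh => ⟨?_, ?_⟩⟩
  · have hconv := sum_convProd_comp g h hfgh (HopfAlgebra.antipode k) LinearMap.id
    simp only [LinearMap.comp_id] at hconv
    rw [hconv, ← LinearMap.rTensor_def, HopfAlgebra.mul_antipode_rTensor_comul,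
      comp_linearMap_comp_counit]
  · have hconv := sum_convProd_comp g h hfgh LinearMap.id (HopfAlgebra.antipode k)
    simp only [LinearMap.comp_id] at hconv
    rw [hconv, ← LinearMap.lTensor_def, HopfAlgebra.mul_antipode_lTensor_comul,
      comp_linearMap_comp_counit]
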